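/- If a natural number n has at most k nonzero digits in its base-d expansion (d ≥ 2), then n is the sum of at most 2k palindromes in base d. -/

import Mathlib

/-!
Write `n = ∑ δⱼ dʲ` and split off each nonzero term: it suffices that `a * d ^ j` with `0 < a < d`
is a sum of two palindromes. For `j = 0` it is a single digit; `d ^ j = (d-1 … d-1)_d + 1`; and for
`2 ≤ a`, `a * d ^ (j + 1) = (a-1, d-1, …, d-1, a-1)_d + (d + 1 - a)`.
-/

def IsPalindrome (d n : ℕ) : Prop := (Nat.digits d n).reverse = Nat.digits d n

def IsSumOfPalindromes (d m n : ℕ) : Prop :=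
  ∃ l : List ℕ, l.length ≤ m ∧ (∀ p ∈ l, IsPalindrome d p) ∧ l.sum = n

theorem IsPalindrome.of_lt {d n : ℕ} (h : n < d) : IsPalindrome d n := by
  rcases Nat.eq_zero_or_pos n with rfl | hn
  · simp [IsPalindrome]
  · simp [IsPalindrome, Nat.digits_of_lt d n hn.ne' h]

theorem IsPalindrome.ofDigits {d : ℕ} (hd : 1 < d) {L : List ℕ} (hrev : L.reverse = L)
    (hlt : ∀ x ∈ L, x < d) (hlast : ∀ h : L ≠ [], L.getLast h ≠ 0) :
    IsPalindrome d (Nat.ofDigits d L) := by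
  rw [IsPalindrome, Nat.digits_ofDigits d hd L hlt hlast, hrev]

theorem ofDigits_replicate_pred_add_one {d : ℕ} (hd : 0 < d) (j : ℕ) :
    Nat.ofDigits d (List.replicate j (d - 1)) + 1 = d ^ j := by
  induction j with
  | zero => simp
  | succ j ih =>
    rw [List.replicate_succ, Nat.ofDigits_cons, pow_succ', ← ih]
    zify [hd]
    ring

namespace IsSumOfPalindromes

variable {d m m' a b : ℕ}

theorem zero : IsSumOfPalindromes d m 0 :=
  ⟨[], by simp, by simp, rfl⟩

theorem of_isPalindrome (h : IsPalindrome d a) : IsSumOfPalindromes d 1 a :=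
  ⟨[a], by simp, by simpa using h, by simp⟩

theorem mono (hm : m ≤ m') : IsSumOfPalindromes d m a → IsSumOfPalindromes d m' a
  | ⟨l, hl, hp, hs⟩ => ⟨l, hl.trans hm, hp, hs⟩

theorem add : IsSumOfPalindromes d m a → IsSumOfPalindromes d m' b →
    IsSumOfPalindromes d (m + m') (a + b)
  | ⟨l, hl, hp, hs⟩, ⟨l', hl', hp', hs'⟩ =>
    ⟨l ++ l', by rw [List.length_append]; omega,
      fun q hq => (List.mem_append.1 hq).elim (hp q) (hp' q), by rw [List.sum_append, hs, hs']⟩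

end IsSumOfPalindromes

theorem isSumOfPalindromes_pow {d : ℕ} (hd : 1 < d) (j : ℕ) :
    IsSumOfPalindromes d 2 (d ^ j) := by
  rw [← ofDigits_replicate_pred_add_one (by omega) j]
  refine .add (.of_isPalindrome (.ofDigits hd (by simp) ?_ ?_)) (.of_isPalindrome (.of_lt hd))
  · intro x hx
    rw [List.eq_of_mem_replicate hx]
    omega
  · intro h
    rw [List.getLast_replicate]
    omega

theorem isSumOfPalindromes_mul_pow_succ {d a : ℕ} (ha : 2 ≤ a) (had : a < d) (j : ℕ) :
    IsSumOfPalindromes d 2 (a * d ^ (j + 1)) := by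
  have hpal : IsPalindrome d (Nat.ofDigits d ((a - 1) :: List.replicate j (d - 1) ++ [a - 1])) := by
    refine .ofDigits (by omega) (by simp) (fun x hx => ?_) (fun _ => ?_)
    · simp only [List.mem_append, List.mem_cons, List.mem_replicate, List.not_mem_nil,
        or_false] at hx
      omega
    · rw [List.getLast_append_singleton]
      omega
  have hsum : Nat.ofDigits d ((a - 1) :: List.replicate j (d - 1) ++ [a - 1]) + (d + 1 - a) =
      a * d ^ (j + 1) := by
    have hR := ofDigits_replicate_pred_add_one (by omega : 0 < d) j
    rw [Nat.ofDigits_append, Nat.ofDigits_cons, Nat.ofDigits_singleton, List.length_cons,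
      List.length_replicate]
    zify [(by omega : 1 ≤ a), (by omega : a ≤ d + 1)] at hR ⊢
    linear_combination (d : ℤ) * hR
  rw [← hsum]
  exact .add (.of_isPalindrome hpal) (.of_isPalindrome (.of_lt (by omega)))

theorem isSumOfPalindromes_mul_pow {d a : ℕ} (ha : a ≠ 0) (had : a < d) :
    ∀ j, IsSumOfPalindromes d 2 (a * d ^ j)
  | 0 => by simpa using (IsSumOfPalindromes.of_isPalindrome (.of_lt had)).mono one_le_two
  | j + 1 => by
    obtain rfl | ha : a = 1 ∨ 2 ≤ a := by omega
    · simpa using isSumOfPalindromes_pow (by omega) (j + 1)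
    · exact isSumOfPalindromes_mul_pow_succ ha had j

theorem isSumOfPalindromes_ofDigits {d : ℕ} {L : List ℕ} (hL : ∀ x ∈ L, x < d) :
    IsSumOfPalindromes d (2 * (L.filter (· ≠ 0)).length) (Nat.ofDigits d L) := by
  induction L using List.reverseRecOn with
  | nil => exact .zero
  | append_singleton M a ih =>
    have hM := ih fun x hx => hL x (by simp [hx])
    rw [Nat.ofDigits_append, Nat.ofDigits_singleton, mul_comm (d ^ _)]
    by_cases ha : a = 0
    · have hlen : ((M ++ [a]).filter (· ≠ 0)).length = (M.filter (· ≠ 0)).length := by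
        simp [ha]
      simpa [hlen, ha] using hM
    · have hlen : ((M ++ [a]).filter (· ≠ 0)).length = (M.filter (· ≠ 0)).length + 1 := by
        simp [ha]
      rw [hlen, mul_add]
      exact hM.add (isSumOfPalindromes_mul_pow ha (hL a (by simp)) _)

theorem sum_two_k_palindromes (d : ℕ) (hd : 2 ≤ d) (k n : ℕ)
    (h : ((Nat.digits d n).filter (· ≠ 0)).length ≤ k) :
    ∃ l : List ℕ, l.length ≤ 2 * k ∧ (∀ p ∈ l, IsPalindrome d p) ∧ l.sum = n := by
  have hn : IsSumOfPalindromes d _ (Nat.ofDigits d (Nat.digits d n)) :=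
    isSumOfPalindromes_ofDigits fun _ hx => Nat.digits_lt_base hd hx
  rw [Nat.ofDigits_digits] at hn
  exact hn.mono (by omega)
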